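/- arXiv:2108.05174 — 9 statements merged into one kernel-verified Lean document; each statement's English description precedes it below -/
import Mathlib

section
/- Let E be a Banach lattice with strictly monotone norm (i.e., ‖f‖ < ‖g‖ whenever 0 ≤ f ≤ g and f ≠ g) and let T : E → E be a positive linear contraction. Then the fixed space of T is a sublattice of E: for every f with Tf = f, one has T|f| = |f|. -/
/-!
Positivity makes `T` monotone, so `|f| = |T f| ≤ T |f|` for a fixed point `f`. Since `T` is a
contraction, `‖T |f|‖ ≤ ‖|f|‖`, and strict monotonicity of the norm forces `T |f| = |f|`.
-/

def StrictMonoNorm (E : Type*) [Norm E] [Preorder E] [Zero E] : Prop :=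
  ∀ f g : E, 0 ≤ f → f ≤ g → f ≠ g → ‖f‖ < ‖g‖

theorem StrictMonoNorm.eq_of_le_of_norm_le {E : Type*} [Norm E] [Preorder E] [Zero E]
    (hE : StrictMonoNorm E) {f g : E} (hf : 0 ≤ f) (hfg : f ≤ g) (hgf : ‖g‖ ≤ ‖f‖) : f = g := by
  by_contra hne
  exact (hE f g hf hfg hne).not_ge hgf

theorem abs_map_le_map_abs {α β F : Type*} [Lattice α] [AddGroup α] [Lattice β] [AddGroup β]
    [FunLike F α β] [AddMonoidHomClass F α β] (f : F) (hf : Monotone f) (a : α) :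
    |f a| ≤ f |a| :=
  abs_le'.2 ⟨hf (le_abs_self a), map_neg f a ▸ hf (neg_le_abs a)⟩

theorem fixed_space_sublattice_of_strictly_monotone_norm_general
    {E : Type*} [NormedAddCommGroup E] [Lattice E] [IsOrderedAddMonoid E] [NormedSpace ℝ E]
    (hsm : ∀ f g : E, 0 ≤ f → f ≤ g → f ≠ g → ‖f‖ < ‖g‖)
    (T : E →L[ℝ] E) (hpos : ∀ f : E, 0 ≤ f → 0 ≤ T f) (hcontr : ‖T‖ ≤ 1) :
    ∀ f : E, T f = f → T |f| = |f| := by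
  intro f hf
  have hmono : Monotone T := (monotone_iff_map_nonneg T).2 hpos
  have hle : |f| ≤ T |f| :=
    calc |f| = |T f| := by rw [hf]
      _ ≤ T |f| := abs_map_le_map_abs T hmono f
  have hnorm : ‖T |f|‖ ≤ ‖|f|‖ := by simpa using T.le_of_opNorm_le hcontr |f|
  exact (StrictMonoNorm.eq_of_le_of_norm_le hsm (abs_nonneg f) hle hnorm).symm

/-- If `E` is a Banach lattice with strictly monotone norm and `T` is a positive
linear contraction on `E`, then the fixed space of `T` is a sublattice:
`T f = f` implies `T |f| = |f|`. -/
theorem fixed_space_sublattice_of_strictly_monotone_norm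
    {E : Type*} [NormedAddCommGroup E] [Lattice E] [HasSolidNorm E] [IsOrderedAddMonoid E] [NormedSpace ℝ E] [CompleteSpace E]
    (hsm : ∀ f g : E, 0 ≤ f → f ≤ g → f ≠ g → ‖f‖ < ‖g‖)
    (T : E →L[ℝ] E) (hpos : ∀ f : E, 0 ≤ f → 0 ≤ T f) (hcontr : ‖T‖ ≤ 1) :
    ∀ f : E, T f = f → T |f| = |f| :=
  fixed_space_sublattice_of_strictly_monotone_norm_general hsm T hpos hcontr
end

section
/- Let E be a KB-space (every increasing norm-bounded net in E₊ is norm convergent) and T a positive linear contraction on E. For every f with Tf = f, the sequence (Tⁿ|f|) is increasing and norm convergent to a vector h ∈ fix T which is the smallest upper bound of f and −f within fix T. Consequently fix T is a lattice subspace of E. -/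
/-!
From `T f = f` and positivity, `±f = T (±f) ≤ T |f|`, so `|f| ≤ T |f|` and the orbit `Tⁿ |f|`
increases; contractivity keeps it norm bounded, so the KB property makes it converge to its
supremum `h`, which is fixed by continuity of `T`. A fixed `g` with `±f ≤ g` dominates `|f|`,
hence every `Tⁿ |f| ≤ Tⁿ g = g`, and so `h ≤ g`.
-/

open Filter Topology Set Function

def HasKBProperty (E : Type*) [NormedAddCommGroup E] [Preorder E] : Prop :=
  ∀ D : Set E, D.Nonempty → DirectedOn (· ≤ ·) D → (∀ x ∈ D, 0 ≤ x) →
    (∃ C : ℝ, ∀ x ∈ D, ‖x‖ ≤ C) →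
    ∃ b : E, IsLUB D b ∧ ∀ ε > (0 : ℝ), ∃ x ∈ D, ∀ y ∈ D, x ≤ y → ‖b - y‖ < ε

theorem HasKBProperty.exists_tendsto_isLUB {E : Type*} [NormedAddCommGroup E] [Preorder E]
    (hE : HasKBProperty E) {u : ℕ → E} (hu : Monotone u) (hu₀ : ∀ n, 0 ≤ u n)
    (hbdd : ∃ C : ℝ, ∀ n, ‖u n‖ ≤ C) :
    ∃ b, Tendsto u atTop (𝓝 b) ∧ IsLUB (range u) b := by
  obtain ⟨C, hC⟩ := hbdd
  obtain ⟨b, hlub, happrox⟩ := hE (range u) (range_nonempty u)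
    (directedOn_range.2 hu.directed_le) (forall_mem_range.2 hu₀) ⟨C, forall_mem_range.2 hC⟩
  refine ⟨b, Metric.tendsto_atTop.2 fun ε hε => ?_, hlub⟩
  obtain ⟨_, ⟨m, rfl⟩, hm⟩ := happrox ε hε
  exact ⟨m, fun n hn => by
    rw [dist_comm, dist_eq_norm]
    exact hm _ (mem_range_self n) (hu hn)⟩

theorem ContinuousLinearMap.norm_iterate_apply_le {𝕜 E : Type*} [NontriviallyNormedField 𝕜]
    [SeminormedAddCommGroup E] [NormedSpace 𝕜 E] {T : E →L[𝕜] E} (hT : ‖T‖ ≤ 1) (x : E)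
    (n : ℕ) : ‖T^[n] x‖ ≤ ‖x‖ := by
  induction n with
  | zero => rfl
  | succ n ih =>
    rw [iterate_succ_apply']
    exact (T.le_of_opNorm_le hT _).trans (by rwa [one_mul])

theorem abs_le_map_abs_of_map_eq {E F : Type*} [Lattice E] [AddCommGroup E]
    [IsOrderedAddMonoid E] [FunLike F E E] [AddMonoidHomClass F E E] {T : F} (hT : Monotone T)
    {f : E} (hf : T f = f) : |f| ≤ T |f| := by
  refine abs_le'.2 ⟨?_, ?_⟩
  · calc f = T f := hf.symm
      _ ≤ T |f| := hT (le_abs_self f)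
  · calc -f = T (-f) := by rw [map_neg, hf]
      _ ≤ T |f| := hT (neg_le_abs f)

theorem fixed_space_lattice_subspace_of_KB_general
    {E : Type*} [NormedAddCommGroup E] [Lattice E] [IsOrderedAddMonoid E] [NormedSpace ℝ E]
    -- `E` is a KB-space: every increasing norm-bounded net in `E₊` is norm convergent
    (hKB : ∀ D : Set E, D.Nonempty → DirectedOn (· ≤ ·) D → (∀ x ∈ D, 0 ≤ x) →
      (∃ C : ℝ, ∀ x ∈ D, ‖x‖ ≤ C) →
      ∃ b : E, IsLUB D b ∧ ∀ ε > (0 : ℝ), ∃ x ∈ D, ∀ y ∈ D, x ≤ y → ‖b - y‖ < ε)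
    (T : E →L[ℝ] E) (hpos : ∀ f : E, 0 ≤ f → 0 ≤ T f) (hcontr : ‖T‖ ≤ 1) :
    ∀ f : E, T f = f →
      Monotone (fun n : ℕ => (T ^ n) |f|) ∧
      ∃ h : E, Filter.Tendsto (fun n : ℕ => (T ^ n) |f|) Filter.atTop (nhds h) ∧
        T h = h ∧ IsLeast {g : E | T g = g ∧ f ≤ g ∧ -f ≤ g} h := by
  intro f hf
  simp only [FunLike.coe_pow_eq_iterate]
  have hT : Monotone T := (monotone_iff_map_nonneg T).2 hpos
  have hseq : Monotone fun n => T^[n] |f| :=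
    hT.monotone_iterate_of_le_map (abs_le_map_abs_of_map_eq hT hf)
  obtain ⟨h, hlim, hlub⟩ := HasKBProperty.exists_tendsto_isLUB hKB hseq
    (fun n => (abs_nonneg f).trans (hseq n.zero_le))
    ⟨‖|f|‖, ContinuousLinearMap.norm_iterate_apply_le hcontr |f|⟩
  have hTh : T h = h := isFixedPt_of_tendsto_iterate hlim T.continuous.continuousAt
  have habs : |f| ≤ h := hlub.1 (mem_range_self 0)
  refine ⟨hseq, h, hlim, hTh, ⟨hTh, (le_abs_self f).trans habs, (neg_le_abs f).trans habs⟩, ?_⟩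
  rintro g ⟨hg, hfg, hnfg⟩
  refine hlub.2 (forall_mem_range.2 fun n => ?_)
  exact (hT.iterate n (abs_le'.2 ⟨hfg, hnfg⟩)).trans_eq (iterate_fixed hg n)

/-- In a KB-space `E` (every increasing norm-bounded net in `E₊` is norm convergent),
for every positive linear contraction `T` on `E` and every fixed vector `f` of `T`,
the sequence `(Tⁿ|f|)` is increasing and norm convergent to a vector `h` which is a
fixed vector of `T` and the smallest upper bound of `f` and `-f` within the fixed
space of `T`.  Consequently, the fixed space of `T` is a lattice subspace of `E`. -/
theorem fixed_space_lattice_subspace_of_KB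
    {E : Type*} [NormedAddCommGroup E] [Lattice E] [IsOrderedAddMonoid E] [HasSolidNorm E] [NormedSpace ℝ E] [CompleteSpace E]
    -- `E` is a KB-space: every increasing norm-bounded net in `E₊` is norm convergent
    (hKB : ∀ D : Set E, D.Nonempty → DirectedOn (· ≤ ·) D → (∀ x ∈ D, 0 ≤ x) →
      (∃ C : ℝ, ∀ x ∈ D, ‖x‖ ≤ C) →
      ∃ b : E, IsLUB D b ∧ ∀ ε > (0 : ℝ), ∃ x ∈ D, ∀ y ∈ D, x ≤ y → ‖b - y‖ < ε)
    (T : E →L[ℝ] E) (hpos : ∀ f : E, 0 ≤ f → 0 ≤ T f) (hcontr : ‖T‖ ≤ 1) :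
    ∀ f : E, T f = f →
      Monotone (fun n : ℕ => (T ^ n) |f|) ∧
      ∃ h : E, Filter.Tendsto (fun n : ℕ => (T ^ n) |f|) Filter.atTop (nhds h) ∧
        T h = h ∧ IsLeast {g : E | T g = g ∧ f ≤ g ∧ -f ≤ g} h :=
  fixed_space_lattice_subspace_of_KB_general hKB T hpos hcontr
end

section
/- Let E be a monotonically complete Banach lattice with the Fatou property and let (T_i)_{i∈I} be a mutually commuting family of positive linear contractions on E. Then for every set G of vectors in the common fixed space F = {x : T_i x = x for all i} that has a supremum g_E in E, the set G also has a supremum g_F in F, and g_E ≤ g_F. -/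
/-!
Fix `x₀ ∈ G` and let `K` consist of the vectors `h ≥ x₀` with `‖h - x₀‖ ≤ ‖gE - x₀‖`,
`h ≤ T i h` for all `i`, and `h` below every upper bound of `G` in `F`; it contains `gE`.
Shifted by `-x₀`, a chain in `K` is a norm-bounded directed set of positive vectors, so it has
a supremum, and the Fatou property keeps that supremum in `K`. By Zorn's lemma `K` has a
maximal element `gF ≥ gE`. Each `T i` maps `K` into itself (commutativity preserves
`h ≤ T j h`, and `T i` is a contraction fixing `x₀`), so `gF ≤ T i gF ∈ K` and maximality
give `T i gF = gF`.
-/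

open Function Set

def MonotonicallyComplete (E : Type*) [NormedAddCommGroup E] [Lattice E] : Prop :=
  ∀ D : Set E, D.Nonempty → DirectedOn (· ≤ ·) D → (∀ x ∈ D, 0 ≤ x) →
    (∃ C : ℝ, ∀ x ∈ D, ‖x‖ ≤ C) → ∃ b : E, IsLUB D b

def HasFatouProperty (E : Type*) [NormedAddCommGroup E] [Lattice E] : Prop :=
  ∀ (D : Set E) (b : E), D.Nonempty → DirectedOn (· ≤ ·) D →
    (∀ x ∈ D, 0 ≤ x) → IsLUB D b → ‖b‖ = ⨆ x : D, ‖(x : E)‖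

theorem IsLUB.le_apply_of_forall_le_apply {α : Type*} [Preorder α] {f : α → α}
    (hf : Monotone f) {s : Set α} {b : α} (hb : IsLUB s b) (hs : ∀ x ∈ s, x ≤ f x) :
    b ≤ f b :=
  hb.2 fun x hx => (hs x hx).trans (hf (hb.1 hx))

theorem exists_ge_forall_isFixedPt_of_chains {α ι : Type*} [PartialOrder α] (f : ι → α → α)
    {K : Set α} (hK : ∀ c ⊆ K, IsChain (· ≤ ·) c → ∀ y ∈ c, ∃ ub ∈ K, ∀ z ∈ c, z ≤ ub)
    (hmaps : ∀ i, MapsTo (f i) K K) (hle : ∀ i, ∀ x ∈ K, x ≤ f i x) {a : α} (ha : a ∈ K) :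
    ∃ m ∈ K, a ≤ m ∧ ∀ i, IsFixedPt (f i) m := by
  obtain ⟨m, ham, hm⟩ := zorn_le_nonempty₀ K hK a ha
  exact ⟨m, hm.prop, ham, fun i => (hm.eq_of_le (hmaps i hm.prop) (hle i m hm.prop)).symm⟩

theorem IsBot.subsingleton {α : Type*} [AddCommGroup α] [PartialOrder α]
    [IsOrderedAddMonoid α] {a : α} (ha : IsBot a) : Subsingleton α := by
  have eq_bot (x : α) : x = a := le_antisymm (by simpa using ha (a + (a - x))) (ha x)
  exact ⟨fun x y => (eq_bot x).trans (eq_bot y).symm⟩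

section BanachLattice

variable {E : Type*} [NormedAddCommGroup E] [Lattice E]

theorem MonotonicallyComplete.exists_isLUB_norm_le (hmc : MonotonicallyComplete E)
    (hF : HasFatouProperty E) {D : Set E} (hne : D.Nonempty) (hdir : DirectedOn (· ≤ ·) D)
    (hpos : ∀ x ∈ D, 0 ≤ x) {C : ℝ} (hC : ∀ x ∈ D, ‖x‖ ≤ C) : ∃ b, IsLUB D b ∧ ‖b‖ ≤ C := by
  obtain ⟨b, hb⟩ := hmc D hne hdir hpos ⟨C, hC⟩
  have : Nonempty D := hne.to_subtype
  refine ⟨b, hb, ?_⟩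
  rw [hF D b hne hdir hpos hb]
  exact ciSup_le fun x => hC x x.2

theorem MonotonicallyComplete.exists_isLUB_norm_sub_le [IsOrderedAddMonoid E]
    (hmc : MonotonicallyComplete E) (hF : HasFatouProperty E) {D : Set E} (hne : D.Nonempty)
    (hdir : DirectedOn (· ≤ ·) D) {a : E} (ha : ∀ x ∈ D, a ≤ x) {C : ℝ}
    (hC : ∀ x ∈ D, ‖x - a‖ ≤ C) : ∃ b, IsLUB D b ∧ ‖b - a‖ ≤ C := by
  let f := OrderIso.subRight a
  obtain ⟨b, hb, hbC⟩ := hmc.exists_isLUB_norm_le hF (hne.image f)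
    (hdir.mono_comp fun _ _ h => f.monotone h)
    (by rintro _ ⟨x, hx, rfl⟩; exact sub_nonneg.2 (ha x hx))
    (by rintro _ ⟨x, hx, rfl⟩; exact hC x hx)
  exact ⟨b + a, f.isLUB_image.1 hb, by simpa using hbC⟩

end BanachLattice

section FixedSpace

variable {E : Type*} [NormedAddCommGroup E] [Lattice E] [IsOrderedAddMonoid E]
  [NormedSpace ℝ E] {I : Type*} {T : I → E →L[ℝ] E}

def supCandidates (T : I → E →L[ℝ] E) (x₀ : E) (C : ℝ) (U : Set E) : Set E :=
  {h | x₀ ≤ h ∧ ‖h - x₀‖ ≤ C ∧ (∀ i, h ≤ T i h) ∧ h ∈ lowerBounds U}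

theorem supCandidates_mapsTo (hpos : ∀ i, ∀ x : E, 0 ≤ x → 0 ≤ T i x)
    (hcontr : ∀ i, ‖T i‖ ≤ 1) (hcomm : ∀ i j, (T i).comp (T j) = (T j).comp (T i))
    {x₀ : E} (hx₀ : ∀ i, T i x₀ = x₀) {C : ℝ} {U : Set E} (hU : ∀ p ∈ U, ∀ i, T i p = p)
    (j : I) : MapsTo (T j) (supCandidates T x₀ C U) (supCandidates T x₀ C U) := by
  rintro h ⟨hx₀h, hhC, hsub, hhU⟩
  have hmono := (monotone_iff_map_nonneg (T j)).2 (hpos j)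
  refine ⟨hx₀ j ▸ hmono hx₀h, ?_, fun i => ?_, fun p hp => hU p hp j ▸ hmono (hhU hp)⟩
  · rw [← hx₀ j, ← map_sub]
    exact ((T j).le_of_opNorm_le (hcontr j) _).trans (by simpa using hhC)
  · exact (hmono (hsub i)).trans_eq (ContinuousLinearMap.ext_iff.1 (hcomm j i) h)

theorem supCandidates_chain_bound (hmc : MonotonicallyComplete E) (hF : HasFatouProperty E)
    (hpos : ∀ i, ∀ x : E, 0 ≤ x → 0 ≤ T i x) {x₀ : E} {C : ℝ} {U : Set E} :
    ∀ c ⊆ supCandidates T x₀ C U, IsChain (· ≤ ·) c →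
      ∀ y ∈ c, ∃ ub ∈ supCandidates T x₀ C U, ∀ z ∈ c, z ≤ ub := by
  intro c hcK hc y hy
  obtain ⟨b, hb, hbC⟩ := hmc.exists_isLUB_norm_sub_le hF ⟨y, hy⟩ hc.directedOn
    (fun x hx => (hcK hx).1) (fun x hx => (hcK hx).2.1)
  refine ⟨b, ⟨(hcK hy).1.trans (hb.1 hy), hbC, fun i => ?_, fun p hp => hb.2 fun x hx => ?_⟩,
    fun z hz => hb.1 hz⟩
  · exact hb.le_apply_of_forall_le_apply ((monotone_iff_map_nonneg (T i)).2 (hpos i))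
      fun x hx => (hcK hx).2.2.1 i
  · exact (hcK hx).2.2.2 hp

end FixedSpace

theorem sup_in_fixed_space_exists_general
    {E : Type*} [NormedAddCommGroup E] [Lattice E] [IsOrderedAddMonoid E] [NormedSpace ℝ E]
    -- `E` is monotonically complete: every norm-bounded increasing net in `E₊` has a supremum
    (hmc : ∀ D : Set E, D.Nonempty → DirectedOn (· ≤ ·) D → (∀ x ∈ D, 0 ≤ x) →
      (∃ C : ℝ, ∀ x ∈ D, ‖x‖ ≤ C) → ∃ b : E, IsLUB D b)
    -- `E` has the Fatou property
    (hfatou : ∀ (D : Set E) (b : E), D.Nonempty → DirectedOn (· ≤ ·) D →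
      (∀ x ∈ D, 0 ≤ x) → IsLUB D b → ‖b‖ = ⨆ x : D, ‖(x : E)‖)
    {I : Type*} (T : I → E →L[ℝ] E)
    (hpos : ∀ i, ∀ x : E, 0 ≤ x → 0 ≤ T i x) (hcontr : ∀ i, ‖T i‖ ≤ 1)
    (hcomm : ∀ i j, (T i).comp (T j) = (T j).comp (T i))
    (G : Set E) (hG : ∀ x ∈ G, ∀ i, T i x = x)
    (gE : E) (hlub : IsLUB G gE) :
    ∃ gF : E, gE ≤ gF ∧
      IsLeast {h : E | (∀ i, T i h = h) ∧ ∀ x ∈ G, x ≤ h} gF := by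
  rcases G.eq_empty_or_nonempty with rfl | ⟨x₀, hx₀⟩
  · have := (isLUB_empty_iff.1 hlub).subsingleton
    exact ⟨gE, le_rfl, ⟨fun _ => Subsingleton.elim _ _, by simp⟩,
      fun p _ => (Subsingleton.elim gE p).le⟩
  set U := {h : E | (∀ i, T i h = h) ∧ ∀ x ∈ G, x ≤ h}
  have hgE : gE ∈ supCandidates T x₀ ‖gE - x₀‖ U :=
    ⟨hlub.1 hx₀, le_rfl,
      fun i => hlub.le_apply_of_forall_le_apply ((monotone_iff_map_nonneg (T i)).2 (hpos i))
        fun x hx => (hG x hx i).ge,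
      fun p hp => hlub.2 hp.2⟩
  obtain ⟨gF, hgF, hgEgF, hfix⟩ := exists_ge_forall_isFixedPt_of_chains (fun i => T i)
    (supCandidates_chain_bound hmc hfatou hpos)
    (supCandidates_mapsTo hpos hcontr hcomm (hG x₀ hx₀) fun p hp => hp.1)
    (fun i h hh => hh.2.2.1 i) hgE
  exact ⟨gF, hgEgF, ⟨hfix, fun x hx => (hlub.1 hx).trans hgEgF⟩, hgF.2.2.2⟩

/-- Main theorem, part (d), first half: in a monotonically complete Banach lattice
with the Fatou property, for any commuting family of positive linear contractions,
every subset `G` of the common fixed space `F` that has a supremum `gE` in `E` also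
has a supremum `gF` within `F`, and `gE ≤ gF`. -/
theorem sup_in_fixed_space_exists
    {E : Type*} [NormedAddCommGroup E] [Lattice E] [HasSolidNorm E] [IsOrderedAddMonoid E] [NormedSpace ℝ E] [CompleteSpace E]
    -- `E` is monotonically complete: every norm-bounded increasing net in `E₊` has a supremum
    (hmc : ∀ D : Set E, D.Nonempty → DirectedOn (· ≤ ·) D → (∀ x ∈ D, 0 ≤ x) →
      (∃ C : ℝ, ∀ x ∈ D, ‖x‖ ≤ C) → ∃ b : E, IsLUB D b)
    -- `E` has the Fatou property
    (hfatou : ∀ (D : Set E) (b : E), D.Nonempty → DirectedOn (· ≤ ·) D →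
      (∀ x ∈ D, 0 ≤ x) → IsLUB D b → ‖b‖ = ⨆ x : D, ‖(x : E)‖)
    {I : Type*} (T : I → E →L[ℝ] E)
    (hpos : ∀ i, ∀ x : E, 0 ≤ x → 0 ≤ T i x) (hcontr : ∀ i, ‖T i‖ ≤ 1)
    (hcomm : ∀ i j, (T i).comp (T j) = (T j).comp (T i))
    (G : Set E) (hG : ∀ x ∈ G, ∀ i, T i x = x)
    (gE : E) (hlub : IsLUB G gE) :
    ∃ gF : E, gE ≤ gF ∧
      IsLeast {h : E | (∀ i, T i h = h) ∧ ∀ x ∈ G, x ≤ h} gF :=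
  sup_in_fixed_space_exists_general hmc hfatou T hpos hcontr hcomm G hG gE hlub
end

section
/- Let E be a monotonically complete Banach lattice with the Fatou property and (T_i)_{i∈I} a mutually commuting family of positive linear contractions on E. Then the common fixed space F = {x : T_i x = x for all i} is a lattice subspace of E: every f ∈ F has a least upper bound of {f, −f} within F. -/
/-!
The least upper bound of `{f, -f}` in the fixed space is the least common fixed point above `|f|`,
obtained by Zorn's lemma. Consider the elements `x ≥ |f|` with `x ≤ T i x` for all `i` and
`‖x‖ ≤ ‖|f|‖` that lie below every common fixed point above `|f|`. Monotone completeness gives a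
chain of them a supremum, which the Fatou property keeps in the same norm ball, so the set is
inductive. Since the `T i` are monotone, commute and do not increase norms, each `T i` maps the set
into itself; hence a maximal element `m`, which satisfies `m ≤ T i m`, is fixed by every `T i`.
-/

open Set

section

variable {E : Type*} [NormedAddCommGroup E] [PartialOrder E]

theorem exists_isLUB_norm_le_of_fatou
    (hmc : ∀ D : Set E, D.Nonempty → DirectedOn (· ≤ ·) D → (∀ x ∈ D, 0 ≤ x) →
      (∃ C : ℝ, ∀ x ∈ D, ‖x‖ ≤ C) → ∃ b : E, IsLUB D b)
    (hfatou : ∀ (D : Set E) (b : E), D.Nonempty → DirectedOn (· ≤ ·) D →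
      (∀ x ∈ D, 0 ≤ x) → IsLUB D b → ‖b‖ = ⨆ x : D, ‖(x : E)‖)
    {D : Set E} (hne : D.Nonempty) (hdir : DirectedOn (· ≤ ·) D) (hD : ∀ x ∈ D, 0 ≤ x)
    {C : ℝ} (hC : ∀ x ∈ D, ‖x‖ ≤ C) : ∃ b, IsLUB D b ∧ ‖b‖ ≤ C := by
  obtain ⟨b, hb⟩ := hmc D hne hdir hD ⟨C, hC⟩
  have : Nonempty D := hne.to_subtype
  exact ⟨b, hb, (hfatou D b hne hdir hD hb).trans_le (ciSup_le fun x => hC x x.2)⟩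

variable {I : Type*} (T : I → E → E)

def commonFixedPoints : Set E := {h | ∀ i, T i h = h}

def leastFixedCandidates (a : E) : Set E :=
  {x | a ≤ x ∧ ‖x‖ ≤ ‖a‖ ∧ (∀ i, x ≤ T i x) ∧ x ∈ lowerBounds (commonFixedPoints T ∩ Ici a)}

variable {T}

theorem self_mem_leastFixedCandidates {a : E} (ha : ∀ i, a ≤ T i a) :
    a ∈ leastFixedCandidates T a :=
  ⟨le_rfl, le_rfl, ha, fun _ h => h.2⟩

theorem map_mem_leastFixedCandidates (hmono : ∀ i, Monotone (T i))
    (hnorm : ∀ i x, ‖T i x‖ ≤ ‖x‖) (hcomm : ∀ i j x, T i (T j x) = T j (T i x))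
    {a x : E} (hx : x ∈ leastFixedCandidates T a) (i : I) :
    T i x ∈ leastFixedCandidates T a := by
  obtain ⟨hax, hxa, hsub, hlow⟩ := hx
  refine ⟨hax.trans (hsub i), (hnorm i x).trans hxa, fun j => ?_, fun h ⟨hfix, hah⟩ => ?_⟩
  · rw [hcomm j i]
    exact hmono i (hsub j)
  · rw [← hfix i]
    exact hmono i (hlow ⟨hfix, hah⟩)

theorem exists_ub_mem_leastFixedCandidates
    (hmc : ∀ D : Set E, D.Nonempty → DirectedOn (· ≤ ·) D → (∀ x ∈ D, 0 ≤ x) →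
      (∃ C : ℝ, ∀ x ∈ D, ‖x‖ ≤ C) → ∃ b : E, IsLUB D b)
    (hfatou : ∀ (D : Set E) (b : E), D.Nonempty → DirectedOn (· ≤ ·) D →
      (∀ x ∈ D, 0 ≤ x) → IsLUB D b → ‖b‖ = ⨆ x : D, ‖(x : E)‖)
    (hmono : ∀ i, Monotone (T i)) {a : E} (ha : 0 ≤ a) {c : Set E}
    (hc : c ⊆ leastFixedCandidates T a) (hchain : IsChain (· ≤ ·) c) (hne : c.Nonempty) :
    ∃ b ∈ leastFixedCandidates T a, ∀ x ∈ c, x ≤ b := by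
  obtain ⟨b, hb, hbnorm⟩ := exists_isLUB_norm_le_of_fatou hmc hfatou hne hchain.directedOn
    (fun x hx => ha.trans (hc hx).1) (fun x hx => (hc hx).2.1)
  obtain ⟨y, hy⟩ := hne
  refine ⟨b, ⟨(hc hy).1.trans (hb.1 hy), hbnorm, fun i => hb.2 fun x hx => ?_,
    fun h hh => hb.2 fun x hx => (hc hx).2.2.2 hh⟩, hb.1⟩
  exact ((hc hx).2.2.1 i).trans (hmono i (hb.1 hx))

theorem exists_isLeast_commonFixedPoints_inter_Ici
    (hmc : ∀ D : Set E, D.Nonempty → DirectedOn (· ≤ ·) D → (∀ x ∈ D, 0 ≤ x) →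
      (∃ C : ℝ, ∀ x ∈ D, ‖x‖ ≤ C) → ∃ b : E, IsLUB D b)
    (hfatou : ∀ (D : Set E) (b : E), D.Nonempty → DirectedOn (· ≤ ·) D →
      (∀ x ∈ D, 0 ≤ x) → IsLUB D b → ‖b‖ = ⨆ x : D, ‖(x : E)‖)
    (hmono : ∀ i, Monotone (T i)) (hnorm : ∀ i x, ‖T i x‖ ≤ ‖x‖)
    (hcomm : ∀ i j x, T i (T j x) = T j (T i x)) {a : E} (ha₀ : 0 ≤ a) (ha : ∀ i, a ≤ T i a) :
    ∃ m, IsLeast (commonFixedPoints T ∩ Ici a) m := by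
  obtain ⟨m, -, hm, hmax⟩ := zorn_le_nonempty₀ (leastFixedCandidates T a)
    (fun c hc hchain y hy => exists_ub_mem_leastFixedCandidates hmc hfatou hmono ha₀ hc hchain
      ⟨y, hy⟩) a (self_mem_leastFixedCandidates ha)
  have hfix : m ∈ commonFixedPoints T := fun i =>
    le_antisymm (hmax (map_mem_leastFixedCandidates hmono hnorm hcomm hm i) (hm.2.2.1 i))
      (hm.2.2.1 i)
  exact ⟨m, ⟨hfix, hm.1⟩, hm.2.2.2⟩

end

theorem fixed_space_is_lattice_subspace_general
    {E : Type*} [NormedAddCommGroup E] [Lattice E] [IsOrderedAddMonoid E] [NormedSpace ℝ E]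
    (hmc : ∀ D : Set E, D.Nonempty → DirectedOn (· ≤ ·) D → (∀ x ∈ D, 0 ≤ x) →
      (∃ C : ℝ, ∀ x ∈ D, ‖x‖ ≤ C) → ∃ b : E, IsLUB D b)
    (hfatou : ∀ (D : Set E) (b : E), D.Nonempty → DirectedOn (· ≤ ·) D →
      (∀ x ∈ D, 0 ≤ x) → IsLUB D b → ‖b‖ = ⨆ x : D, ‖(x : E)‖)
    {I : Type*} (T : I → E →L[ℝ] E)
    (hpos : ∀ i, ∀ x : E, 0 ≤ x → 0 ≤ T i x) (hcontr : ∀ i, ‖T i‖ ≤ 1)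
    (hcomm : ∀ i j, (T i).comp (T j) = (T j).comp (T i)) :
    ∀ f : E, (∀ i, T i f = f) →
      ∃ m : E, IsLeast {h : E | (∀ i, T i h = h) ∧ f ≤ h ∧ -f ≤ h} m := by
  intro f hf
  have hmono (i : I) : Monotone (T i) := (monotone_iff_map_nonneg (T i)).2 (hpos i)
  have hnorm (i : I) (x : E) : ‖T i x‖ ≤ ‖x‖ := by
    simpa using (T i).le_of_opNorm_le (hcontr i) x
  have habs (i : I) : |f| ≤ T i |f| := by
    refine abs_le'.2 ⟨?_, ?_⟩
    · simpa [hf i] using hmono i (le_abs_self f)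
    · simpa [hf i] using hmono i (neg_le_abs f)
  have hset : {h : E | (∀ i, T i h = h) ∧ f ≤ h ∧ -f ≤ h} =
      commonFixedPoints (fun i => T i) ∩ Ici |f| := by
    ext h
    simp [commonFixedPoints, abs_le']
  rw [hset]
  exact exists_isLeast_commonFixedPoints_inter_Ici hmc hfatou hmono hnorm
    (fun i j x => congr($(hcomm i j) x)) (abs_nonneg f) habs

/-- Main theorem, part (a): in a monotonically complete Banach lattice with the
Fatou property, the common fixed space `F` of a commuting family of positive linear
contractions is a lattice subspace of `E`: every `f ∈ F` admits a least upper bound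
of `{f, -f}` within `F`. -/
theorem fixed_space_is_lattice_subspace
    {E : Type*} [NormedAddCommGroup E] [Lattice E] [HasSolidNorm E] [IsOrderedAddMonoid E] [NormedSpace ℝ E] [CompleteSpace E]
    (hmc : ∀ D : Set E, D.Nonempty → DirectedOn (· ≤ ·) D → (∀ x ∈ D, 0 ≤ x) →
      (∃ C : ℝ, ∀ x ∈ D, ‖x‖ ≤ C) → ∃ b : E, IsLUB D b)
    (hfatou : ∀ (D : Set E) (b : E), D.Nonempty → DirectedOn (· ≤ ·) D →
      (∀ x ∈ D, 0 ≤ x) → IsLUB D b → ‖b‖ = ⨆ x : D, ‖(x : E)‖)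
    {I : Type*} (T : I → E →L[ℝ] E)
    (hpos : ∀ i, ∀ x : E, 0 ≤ x → 0 ≤ T i x) (hcontr : ∀ i, ‖T i‖ ≤ 1)
    (hcomm : ∀ i j, (T i).comp (T j) = (T j).comp (T i)) :
    ∀ f : E, (∀ i, T i f = f) →
      ∃ m : E, IsLeast {h : E | (∀ i, T i h = h) ∧ f ≤ h ∧ -f ≤ h} m :=
  fixed_space_is_lattice_subspace_general hmc hfatou T hpos hcontr hcomm
end

section
/- Let E be a monotonically complete AM-space with the Fatou property and (T_i)_{i∈I} a commuting family of positive linear contractions on E. Then the common fixed space F, with the inherited order and norm, is an AM-space: for f, g ∈ F₊, the norm of their supremum taken within F equals max(‖f‖, ‖g‖). -/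
/-!
Let `a = f ⊔ g`; since `f, g` are fixed, `a ≤ Tᵢ a` for every `i`. Consider the set `G` of all `x ≥ a`
with `‖x‖ ≤ ‖a‖`, `x ≤ Tᵢ x` for every `i`, and `x` below every fixed majorant of `a`. In an AM-space
`G` is closed under `⊔`, hence directed and norm bounded, so by monotone completeness it has a
supremum `b`, and the Fatou property gives `‖b‖ ≤ ‖a‖`, so `b ∈ G`. Because the `Tᵢ` commute, they
map `G` into itself; thus `Tᵢ b ≤ b ≤ Tᵢ b`, and `b` is the least fixed majorant of `a`, of norm `‖a‖`.
-/

lemma eq_of_isLUB_of_le_map {α : Type*} [PartialOrder α] {f : α → α} (hf : Monotone f)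
    {s : Set α} {b : α} (hb : IsLUB s b) (hs : ∀ x ∈ s, x ≤ f x) (hfb : f b ∈ s) : f b = b :=
  le_antisymm (hb.1 hfb) (hb.2 fun x hx => (hs x hx).trans (hf (hb.1 hx)))

section FixedMajorant

variable {E I : Type*} [NormedAddCommGroup E] [Lattice E]

lemma norm_le_norm_of_nonneg_of_le (hAM : ∀ f g : E, 0 ≤ f → 0 ≤ g → ‖f ⊔ g‖ = max ‖f‖ ‖g‖)
    {x y : E} (hx : 0 ≤ x) (hxy : x ≤ y) : ‖x‖ ≤ ‖y‖ := by
  have h := hAM x y hx (hx.trans hxy)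
  rw [sup_eq_right.2 hxy] at h
  exact h ▸ le_max_left _ _

/-- The elements of `G` in the construction of the least fixed majorant of `a`. -/
structure IsFixedMajorantApprox (T : I → E → E) (a x : E) : Prop where
  le : a ≤ x
  norm_le : ‖x‖ ≤ ‖a‖
  le_map : ∀ i, x ≤ T i x
  le_of_fixed : ∀ h, (∀ i, T i h = h) → a ≤ h → x ≤ h

variable {T : I → E → E} {a : E}

lemma isFixedMajorantApprox_self (hsub : ∀ i, a ≤ T i a) : IsFixedMajorantApprox T a a :=
  ⟨le_rfl, le_rfl, hsub, fun _ _ hah => hah⟩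

lemma IsFixedMajorantApprox.map (hmono : ∀ i, Monotone (T i)) (hnorm : ∀ i x, ‖T i x‖ ≤ ‖x‖)
    (hcomm : ∀ i j, Function.Commute (T i) (T j)) (hsub : ∀ i, a ≤ T i a) {x : E}
    (hx : IsFixedMajorantApprox T a x) (i : I) : IsFixedMajorantApprox T a (T i x) where
  le := (hsub i).trans (hmono i hx.le)
  norm_le := (hnorm i x).trans hx.norm_le
  le_map j := (hmono i (hx.le_map j)).trans_eq (hcomm i j x)
  le_of_fixed h hh hah := (hmono i (hx.le_of_fixed h hh hah)).trans_eq (hh i)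

lemma supClosed_isFixedMajorantApprox (hAM : ∀ f g : E, 0 ≤ f → 0 ≤ g → ‖f ⊔ g‖ = max ‖f‖ ‖g‖)
    (hmono : ∀ i, Monotone (T i)) (ha : 0 ≤ a) : SupClosed {x | IsFixedMajorantApprox T a x} :=
  fun x hx y hy =>
    { le := hx.le.trans le_sup_left
      norm_le := by
        rw [hAM x y (ha.trans hx.le) (ha.trans hy.le)]
        exact max_le hx.norm_le hy.norm_le
      le_map := fun i => sup_le ((hx.le_map i).trans (hmono i le_sup_left))
        ((hy.le_map i).trans (hmono i le_sup_right))
      le_of_fixed := fun h hh hah => sup_le (hx.le_of_fixed h hh hah) (hy.le_of_fixed h hh hah) }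

lemma exists_isLUB_isFixedMajorantApprox
    (hAM : ∀ f g : E, 0 ≤ f → 0 ≤ g → ‖f ⊔ g‖ = max ‖f‖ ‖g‖)
    (hmc : ∀ D : Set E, D.Nonempty → DirectedOn (· ≤ ·) D → (∀ x ∈ D, 0 ≤ x) →
      (∃ C : ℝ, ∀ x ∈ D, ‖x‖ ≤ C) → ∃ b : E, IsLUB D b)
    (hfatou : ∀ (D : Set E) (b : E), D.Nonempty → DirectedOn (· ≤ ·) D →
      (∀ x ∈ D, 0 ≤ x) → IsLUB D b → ‖b‖ = ⨆ x : D, ‖(x : E)‖)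
    (hmono : ∀ i, Monotone (T i)) (ha : 0 ≤ a) (hsub : ∀ i, a ≤ T i a) :
    ∃ b, IsLUB {x | IsFixedMajorantApprox T a x} b ∧ IsFixedMajorantApprox T a b := by
  set G := {x | IsFixedMajorantApprox T a x}
  have haG : a ∈ G := isFixedMajorantApprox_self hsub
  have hdir : DirectedOn (· ≤ ·) G := (supClosed_isFixedMajorantApprox hAM hmono ha).directedOn
  have hG0 : ∀ x ∈ G, 0 ≤ x := fun x hx => ha.trans hx.le
  obtain ⟨b, hb⟩ := hmc G ⟨a, haG⟩ hdir hG0 ⟨‖a‖, fun x hx => hx.norm_le⟩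
  have : Nonempty G := ⟨⟨a, haG⟩⟩
  refine ⟨b, hb, hb.1 haG, ?_, ?_, ?_⟩
  · rw [hfatou G b ⟨a, haG⟩ hdir hG0 hb]
    exact ciSup_le fun x => x.2.norm_le
  · exact fun i => hb.2 fun x hx => (hx.le_map i).trans (hmono i (hb.1 hx))
  · exact fun h hh hah => hb.2 fun x hx => hx.le_of_fixed h hh hah

theorem exists_isLeast_fixed_majorant_norm_eq
    (hAM : ∀ f g : E, 0 ≤ f → 0 ≤ g → ‖f ⊔ g‖ = max ‖f‖ ‖g‖)
    (hmc : ∀ D : Set E, D.Nonempty → DirectedOn (· ≤ ·) D → (∀ x ∈ D, 0 ≤ x) →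
      (∃ C : ℝ, ∀ x ∈ D, ‖x‖ ≤ C) → ∃ b : E, IsLUB D b)
    (hfatou : ∀ (D : Set E) (b : E), D.Nonempty → DirectedOn (· ≤ ·) D →
      (∀ x ∈ D, 0 ≤ x) → IsLUB D b → ‖b‖ = ⨆ x : D, ‖(x : E)‖)
    (hmono : ∀ i, Monotone (T i)) (hnorm : ∀ i x, ‖T i x‖ ≤ ‖x‖)
    (hcomm : ∀ i j, Function.Commute (T i) (T j)) (ha : 0 ≤ a) (hsub : ∀ i, a ≤ T i a) :
    ∃ m, IsLeast {h | (∀ i, T i h = h) ∧ a ≤ h} m ∧ ‖m‖ = ‖a‖ := by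
  obtain ⟨b, hb, hbG⟩ := exists_isLUB_isFixedMajorantApprox hAM hmc hfatou hmono ha hsub
  have hfix : ∀ i, T i b = b := fun i =>
    eq_of_isLUB_of_le_map (hmono i) hb (fun x hx => hx.le_map i) (hbG.map hmono hnorm hcomm hsub i)
  exact ⟨b, ⟨⟨hfix, hbG.le⟩, fun h hh => hbG.le_of_fixed h hh.1 hh.2⟩,
    le_antisymm hbG.norm_le (norm_le_norm_of_nonneg_of_le hAM ha hbG.le)⟩

end FixedMajorant

theorem fixed_space_is_AM_space_general
    {E : Type*} [NormedAddCommGroup E] [Lattice E] [IsOrderedAddMonoid E] [NormedSpace ℝ E]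
    -- `E` is an AM-space
    (hAM : ∀ f g : E, 0 ≤ f → 0 ≤ g → ‖f ⊔ g‖ = max ‖f‖ ‖g‖)
    (hmc : ∀ D : Set E, D.Nonempty → DirectedOn (· ≤ ·) D → (∀ x ∈ D, 0 ≤ x) →
      (∃ C : ℝ, ∀ x ∈ D, ‖x‖ ≤ C) → ∃ b : E, IsLUB D b)
    (hfatou : ∀ (D : Set E) (b : E), D.Nonempty → DirectedOn (· ≤ ·) D →
      (∀ x ∈ D, 0 ≤ x) → IsLUB D b → ‖b‖ = ⨆ x : D, ‖(x : E)‖)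
    {I : Type*} (T : I → E →L[ℝ] E)
    (hpos : ∀ i, ∀ x : E, 0 ≤ x → 0 ≤ T i x) (hcontr : ∀ i, ‖T i‖ ≤ 1)
    (hcomm : ∀ i j, (T i).comp (T j) = (T j).comp (T i)) :
    ∀ f g : E, (∀ i, T i f = f) → (∀ i, T i g = g) → 0 ≤ f → 0 ≤ g →
      ∃ m : E, IsLeast {h : E | (∀ i, T i h = h) ∧ f ≤ h ∧ g ≤ h} m ∧
        ‖m‖ = max ‖f‖ ‖g‖ := by
  intro f g hf hg hf0 hg0
  have hmono : ∀ i, Monotone (T i) := fun i => (monotone_iff_map_nonneg (T i)).2 (hpos i)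
  have hnorm : ∀ i x, ‖T i x‖ ≤ ‖x‖ := fun i x =>
    ((T i).le_of_opNorm_le (hcontr i) x).trans_eq (one_mul _)
  have hsub : ∀ i, f ⊔ g ≤ T i (f ⊔ g) := fun i =>
    sup_le ((hf i).ge.trans (hmono i le_sup_left)) ((hg i).ge.trans (hmono i le_sup_right))
  obtain ⟨m, hm, hm_norm⟩ := exists_isLeast_fixed_majorant_norm_eq (T := fun i => T i) hAM hmc
    hfatou hmono hnorm (fun i j x => DFunLike.congr_fun (hcomm i j) x) (le_sup_of_le_left hf0) hsub
  refine ⟨m, ?_, hm_norm.trans (hAM f g hf0 hg0)⟩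
  simpa only [sup_le_iff] using hm

/-- Remark (a): if `E` is moreover an AM-space, then the common fixed space `F`
is an AM-space as well: for positive `f, g ∈ F`, the supremum of `f` and `g`
taken within `F` has norm `max ‖f‖ ‖g‖`. -/
theorem fixed_space_is_AM_space
    {E : Type*} [NormedAddCommGroup E] [Lattice E] [IsOrderedAddMonoid E] [HasSolidNorm E] [NormedSpace ℝ E] [CompleteSpace E]
    -- `E` is an AM-space
    (hAM : ∀ f g : E, 0 ≤ f → 0 ≤ g → ‖f ⊔ g‖ = max ‖f‖ ‖g‖)
    (hmc : ∀ D : Set E, D.Nonempty → DirectedOn (· ≤ ·) D → (∀ x ∈ D, 0 ≤ x) →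
      (∃ C : ℝ, ∀ x ∈ D, ‖x‖ ≤ C) → ∃ b : E, IsLUB D b)
    (hfatou : ∀ (D : Set E) (b : E), D.Nonempty → DirectedOn (· ≤ ·) D →
      (∀ x ∈ D, 0 ≤ x) → IsLUB D b → ‖b‖ = ⨆ x : D, ‖(x : E)‖)
    {I : Type*} (T : I → E →L[ℝ] E)
    (hpos : ∀ i, ∀ x : E, 0 ≤ x → 0 ≤ T i x) (hcontr : ∀ i, ‖T i‖ ≤ 1)
    (hcomm : ∀ i j, (T i).comp (T j) = (T j).comp (T i)) :
    ∀ f g : E, (∀ i, T i f = f) → (∀ i, T i g = g) → 0 ≤ f → 0 ≤ g →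
      ∃ m : E, IsLeast {h : E | (∀ i, T i h = h) ∧ f ≤ h ∧ g ≤ h} m ∧
        ‖m‖ = max ‖f‖ ‖g‖ :=
  fixed_space_is_AM_space_general hAM hmc hfatou T hpos hcontr hcomm
end

section
/- Let E be a Banach lattice, T a positive linear contraction on E, and n ≥ 1. Suppose F = fix(Tⁿ), equipped with the order inherited from E, is a Banach lattice. Then the restriction T|_F is a lattice isomorphism of F (bijective, with positive inverse (T|_F)^{n−1}). -/
/-!
On the fixed space of `Tⁿ` the map `T` is invertible with inverse `Tⁿ⁻¹`, since
`Tⁿ⁻¹ ∘ T = T ∘ Tⁿ⁻¹ = Tⁿ` is the identity there. Both `T` and `Tⁿ⁻¹` are positive, hence monotone,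
so `T` is an order isomorphism of the fixed space, and an order isomorphism between
lattices preserves the lattice operations.
-/

open Function

namespace Function.IsPeriodicPt

variable {α : Type*} {f : α → α} {n : ℕ} {x : α}

theorem iterate_pred_apply (hn : 0 < n) (hx : IsPeriodicPt f n x) : f^[n - 1] (f x) = x :=
  (congrFun (iterate_pred_comp_of_pos f hn) x).trans hx

theorem apply_iterate_pred (hn : 0 < n) (hx : IsPeriodicPt f n x) : f (f^[n - 1] x) = x :=
  (congrFun (comp_iterate_pred_of_pos f hn) x).trans hx

end Function.IsPeriodicPt

theorem Monotone.apply_le_apply_iff_of_isPeriodicPt {α : Type*} [Preorder α] {f : α → α}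
    {n : ℕ} {x y : α} (hf : Monotone f) (hn : 0 < n) (hx : IsPeriodicPt f n x)
    (hy : IsPeriodicPt f n y) : f x ≤ f y ↔ x ≤ y := by
  refine ⟨fun h ↦ ?_, fun h ↦ hf h⟩
  rw [← hx.iterate_pred_apply hn, ← hy.iterate_pred_apply hn]
  exact hf.iterate _ h

theorem restriction_to_fixed_space_is_lattice_isomorphism_general
    {E : Type*} [NormedAddCommGroup E] [Lattice E] [IsOrderedAddMonoid E] [NormedSpace ℝ E]
    (T : E →L[ℝ] E) (hpos : ∀ x : E, 0 ≤ x → 0 ≤ T x)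
    (n : ℕ) (hn : 1 ≤ n) :
    -- `T` leaves `F` invariant,
    (∀ x : E, (T ^ n) x = x → (T ^ n) (T x) = T x) ∧
    -- `T` restricted to `F` is bijective,
    Set.BijOn T {x : E | (T ^ n) x = x} {x : E | (T ^ n) x = x} ∧
    -- with inverse `T^(n-1)`, which is positive,
    (∀ x : E, (T ^ n) x = x → (T ^ (n - 1)) (T x) = x ∧ T ((T ^ (n - 1)) x) = x) ∧
    (∀ x : E, 0 ≤ x → 0 ≤ (T ^ (n - 1)) x) ∧
    -- and `T` is an order isomorphism of `F` (hence a lattice isomorphism):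
    (∀ x y : E, (T ^ n) x = x → (T ^ n) y = y → (T x ≤ T y ↔ x ≤ y)) := by
  have hmono : Monotone T := (monotone_iff_map_nonneg T).2 hpos
  have hpos_inv : ∀ x : E, 0 ≤ x → 0 ≤ (T ^ (n - 1)) x :=
    (monotone_iff_map_nonneg (T ^ (n - 1))).1 (by
      rw [FunLike.coe_pow_eq_iterate]
      exact hmono.iterate _)
  simp only [FunLike.coe_pow_eq_iterate] at hpos_inv ⊢
  exact ⟨fun _ hx ↦ IsPeriodicPt.apply hx, bijOn_ptsOfPeriod T hn,
    fun _ hx ↦ ⟨IsPeriodicPt.iterate_pred_apply hn hx, IsPeriodicPt.apply_iterate_pred hn hx⟩,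
    hpos_inv,
    fun _ _ hx hy ↦ hmono.apply_le_apply_iff_of_isPeriodicPt hn hx hy⟩

/-- If `T` is a positive linear contraction on a Banach lattice `E`, `n ≥ 1`, and
the fixed space `F = fix(Tⁿ)` (with the inherited order) is a Banach lattice (a
lattice subspace of `E`), then `T` restricts to a lattice isomorphism of `F`:
`T` maps `F` bijectively onto itself, its inverse on `F` is `T^(n-1)` (which is
positive), and `T` is an order isomorphism of `F`. -/
theorem restriction_to_fixed_space_is_lattice_isomorphism
    {E : Type*} [NormedAddCommGroup E] [Lattice E] [IsOrderedAddMonoid E] [HasSolidNorm E] [NormedSpace ℝ E] [CompleteSpace E]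
    (T : E →L[ℝ] E) (hpos : ∀ x : E, 0 ≤ x → 0 ≤ T x) (hcontr : ‖T‖ ≤ 1)
    (n : ℕ) (hn : 1 ≤ n)
    -- `F = fix(Tⁿ)` is a lattice (hence a Banach lattice) in the inherited order:
    (hlat : ∀ f : E, (T ^ n) f = f →
      ∃ m : E, IsLeast {h : E | (T ^ n) h = h ∧ f ≤ h ∧ -f ≤ h} m) :
    -- `T` leaves `F` invariant,
    (∀ x : E, (T ^ n) x = x → (T ^ n) (T x) = T x) ∧
    -- `T` restricted to `F` is bijective,
    Set.BijOn T {x : E | (T ^ n) x = x} {x : E | (T ^ n) x = x} ∧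
    -- with inverse `T^(n-1)`, which is positive,
    (∀ x : E, (T ^ n) x = x → (T ^ (n - 1)) (T x) = x ∧ T ((T ^ (n - 1)) x) = x) ∧
    (∀ x : E, 0 ≤ x → 0 ≤ (T ^ (n - 1)) x) ∧
    -- and `T` is an order isomorphism of `F` (hence a lattice isomorphism):
    (∀ x y : E, (T ^ n) x = x → (T ^ n) y = y → (T x ≤ T y ↔ x ≤ y)) :=
  restriction_to_fixed_space_is_lattice_isomorphism_general T hpos n hn
end

section
/- Let E = c₀(ℕ₀ ∪ {−1,−2}) with the sup norm, and define T by (Tf)(k) = f(k−1) for k ≥ 1, (Tf)(0) = (f(−1)+f(−2))/2, and (Tf)(k) = f(k) for k ∈ {−1,−2}. Then T is a positive linear contraction and its fixed space equals {f ∈ E : f(k) = 0 for all k ∈ ℕ₀ and f(−1) = −f(−2)}; in particular, the fixed space is nonzero but contains no positive vector other than 0, hence is not a lattice subspace of E. -/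
open Filter

/-- The operator of Example 4.1 on `c₀(ℕ₀ ∪ {-1,-2})`, realized on functions
`ℤ → ℝ` (only the coordinates `k ≥ -2` are relevant). -/
noncomputable def Tc0 : (ℤ → ℝ) → (ℤ → ℝ) := fun f k =>
  if 1 ≤ k then f (k - 1)
  else if k = 0 then (f (-1) + f (-2)) / 2
  else f k

lemma Tc0_of_one_le (f : ℤ → ℝ) {k : ℤ} (hk : 1 ≤ k) : Tc0 f k = f (k - 1) := by
  simp [Tc0, hk]

lemma Tc0_zero (f : ℤ → ℝ) : Tc0 f 0 = (f (-1) + f (-2)) / 2 := by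
  norm_num [Tc0]

lemma Tc0_of_neg (f : ℤ → ℝ) {k : ℤ} (hk : k < 0) : Tc0 f k = f k := by
  have h1 : ¬ (1 : ℤ) ≤ k := by omega
  have h2 : k ≠ 0 := by omega
  simp [Tc0, h1, h2]

lemma const_on_nat (f : ℤ → ℝ) (h : ∀ k : ℤ, 1 ≤ k → f (k - 1) = f k) :
    ∀ k : ℤ, 0 ≤ k → f k = f 0 := by
  intro k hk
  obtain ⟨n, rfl⟩ := Int.eq_ofNat_of_zero_le hk
  induction n with
  | zero => rfl
  | succ m ih =>
      have hh := h ((m : ℤ) + 1) (by omega)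
      have e : ((m : ℤ) + 1) - 1 = (m : ℤ) := by ring
      rw [e] at hh
      have : ((m + 1 : ℕ) : ℤ) = (m : ℤ) + 1 := by push_cast; ring
      rw [this, ← hh, ih (by omega)]

lemma zero_on_nat (f : ℤ → ℝ) (hf : Tendsto f atTop (nhds 0))
    (h : ∀ k : ℤ, 1 ≤ k → f (k - 1) = f k) : ∀ k : ℤ, 0 ≤ k → f k = 0 := by
  have hc := const_on_nat f h
  have h0 : f 0 = 0 := by
    have hev : f =ᶠ[atTop] (fun _ => f 0) := by
      filter_upwards [eventually_ge_atTop (0 : ℤ)] with k hk using hc k hk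
    have : Tendsto (fun _ : ℤ => f 0) atTop (nhds 0) := hf.congr' hev
    exact tendsto_nhds_unique tendsto_const_nhds this
  intro k hk; rw [hc k hk, h0]

/-- Example: on `E = c₀(ℕ₀ ∪ {-1,-2})` (functions `f : ℤ → ℝ`, restricted to the
coordinates `k ≥ -2`, with `f k → 0` as `k → ∞`, sup norm, pointwise order), the
operator `T = Tc0` is a positive linear contraction whose fixed space equals
`{f : f k = 0 for all k ∈ ℕ₀ and f (-1) = -f (-2)}`; in particular the fixed space
is nonzero but contains no positive vector other than `0`, hence it is not a
lattice subspace of `E`. -/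
theorem c0_contraction_fixed_space_not_lattice :
    -- `T` is linear:
    (∀ f g : ℤ → ℝ, Tc0 (f + g) = Tc0 f + Tc0 g) ∧
    (∀ (c : ℝ) (f : ℤ → ℝ), Tc0 (c • f) = c • Tc0 f) ∧
    -- `T` is positive:
    (∀ f : ℤ → ℝ, (∀ k, -2 ≤ k → 0 ≤ f k) → ∀ k, -2 ≤ k → 0 ≤ Tc0 f k) ∧
    -- `T` maps `c₀` into `c₀`:
    (∀ f : ℤ → ℝ, Tendsto f atTop (nhds 0) → Tendsto (Tc0 f) atTop (nhds 0)) ∧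
    -- `T` is contractive for the sup norm:
    (∀ (f : ℤ → ℝ) (C : ℝ), (∀ k, -2 ≤ k → |f k| ≤ C) →
      ∀ k, -2 ≤ k → |Tc0 f k| ≤ C) ∧
    -- the fixed space is `{f : f k = 0 for k ∈ ℕ₀ and f (-1) = -f (-2)}`:
    (∀ f : ℤ → ℝ, Tendsto f atTop (nhds 0) →
      ((∀ k, -2 ≤ k → Tc0 f k = f k) ↔
        ((∀ k, 0 ≤ k → f k = 0) ∧ f (-1) = -f (-2)))) ∧
    -- the fixed space is nonzero:
    (∃ f : ℤ → ℝ, Tendsto f atTop (nhds 0) ∧ (∀ k, -2 ≤ k → Tc0 f k = f k) ∧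
      ∃ k, -2 ≤ k ∧ f k ≠ 0) ∧
    -- but it contains no positive vector except `0` (hence it is not a lattice
    -- subspace of `E`):
    (∀ f : ℤ → ℝ, Tendsto f atTop (nhds 0) → (∀ k, -2 ≤ k → Tc0 f k = f k) →
      (∀ k, -2 ≤ k → 0 ≤ f k) → ∀ k, -2 ≤ k → f k = 0) := by
  have fixed_iff : ∀ f : ℤ → ℝ, Tendsto f atTop (nhds 0) →
      ((∀ k, -2 ≤ k → Tc0 f k = f k) ↔
        ((∀ k, 0 ≤ k → f k = 0) ∧ f (-1) = -f (-2))) := by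
    intro f hf
    constructor
    · intro h
      have hshift : ∀ k : ℤ, 1 ≤ k → f (k - 1) = f k := by
        intro k hk
        rw [← Tc0_of_one_le f hk]; exact h k (by omega)
      have hz := zero_on_nat f hf hshift
      refine ⟨hz, ?_⟩
      have h0 := h 0 (by omega)
      rw [Tc0_zero, hz 0 le_rfl] at h0
      linarith
    · intro ⟨hz, hneg⟩ k hk
      rcases lt_trichotomy k 0 with hk0 | hk0 | hk0
      · exact Tc0_of_neg f hk0
      · subst hk0
        rw [Tc0_zero, hz 0 le_rfl, hneg]; ring
      · rw [Tc0_of_one_le f (by omega), hz (k - 1) (by omega), hz k (by omega)]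
  refine ⟨?_, ?_, ?_, ?_, ?_, fixed_iff, ?_, ?_⟩
  · intro f g; funext k
    by_cases h1 : 1 ≤ k
    · simp [Tc0, h1]
    · by_cases h0 : k = 0 <;> simp [Tc0, h1, h0] <;> ring
  · intro c f; funext k
    by_cases h1 : 1 ≤ k
    · simp [Tc0, h1]
    · by_cases h0 : k = 0 <;> simp [Tc0, h1, h0] <;> ring
  · intro f hpos k hk
    rcases lt_trichotomy k 0 with hk0 | hk0 | hk0
    · rw [Tc0_of_neg f hk0]; exact hpos k hk
    · subst hk0; rw [Tc0_zero]
      have := hpos (-1) (by omega)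
      have := hpos (-2) (by omega)
      linarith
    · rw [Tc0_of_one_le f (by omega)]; exact hpos (k - 1) (by omega)
  · intro f hf
    have hev : (fun k => f (k - 1)) =ᶠ[atTop] Tc0 f := by
      filter_upwards [eventually_ge_atTop (1 : ℤ)] with k hk
      exact (Tc0_of_one_le f hk).symm
    exact (hf.comp (tendsto_atTop_add_const_right atTop (-1) tendsto_id)).congr' hev
  · intro f C hC k hk
    rcases lt_trichotomy k 0 with hk0 | hk0 | hk0
    · rw [Tc0_of_neg f hk0]; exact hC k hk
    · subst hk0; rw [Tc0_zero]
      have h1 := hC (-1) (by omega)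
      have h2 := hC (-2) (by omega)
      rw [abs_le] at h1 h2 ⊢
      constructor <;> [linarith [h1.1, h2.1]; linarith [h1.2, h2.2]]
    · rw [Tc0_of_one_le f (by omega)]; exact hC (k - 1) (by omega)
  · refine ⟨fun k => if k = -1 then 1 else if k = -2 then -1 else 0, ?_, ?_, -1, by omega, by norm_num⟩
    · have hev : (fun _ : ℤ => (0 : ℝ)) =ᶠ[atTop]
          (fun k : ℤ => if k = -1 then (1:ℝ) else if k = -2 then -1 else 0) := by
        filter_upwards [eventually_ge_atTop (0 : ℤ)] with k hk
        have h1 : k ≠ -1 := by omega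
        have h2 : k ≠ -2 := by omega
        simp [h1, h2]
      exact tendsto_const_nhds.congr' hev
    · rw [fixed_iff]
      · refine ⟨fun k hk => ?_, by norm_num⟩
        have h1 : k ≠ -1 := by omega
        have h2 : k ≠ -2 := by omega
        simp [h1, h2]
      · have hev : (fun _ : ℤ => (0 : ℝ)) =ᶠ[atTop]
            (fun k : ℤ => if k = -1 then (1:ℝ) else if k = -2 then -1 else 0) := by
          filter_upwards [eventually_ge_atTop (0 : ℤ)] with k hk
          have h1 : k ≠ -1 := by omega
          have h2 : k ≠ -2 := by omega
          simp [h1, h2]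
        exact tendsto_const_nhds.congr' hev
  · intro f hf hfix hpos k hk
    obtain ⟨hz, hneg⟩ := (fixed_iff f hf).mp hfix
    have h1 := hpos (-1) (by omega)
    have h2 := hpos (-2) (by omega)
    have hm1 : f (-1) = 0 := by linarith [hneg]
    have hm2 : f (-2) = 0 := by linarith [hneg]
    rcases lt_trichotomy k 0 with hk0 | hk0 | hk0
    · interval_cases k <;> assumption
    · exact hz k (le_of_eq hk0.symm)
    · exact hz k hk0.le
end

section
/- Let S : ℝ³ → ℝ³ be the positive operator with matrix rows (1,0,0), (1/3,1/3,1/3), (0,0,1). Then S is a Markov operator (positive and S𝟙 = 𝟙), its fixed space ker(I − S) is spanned by (1,1,1) and (1,0,−1), and this fixed space is not a sublattice of ℝ³ (it is not closed under taking absolute values), although it is a lattice subspace. -/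
/-!
The fixed vectors of `S` are exactly the `x` with `x 1 = (x 0 + x 2) / 2`. On this plane the order
is the product order of the outer coordinates, since the middle one depends monotonically on
them; so the plane is order isomorphic to `ℝ²` and hence a lattice, with
`f ∨ g = (f 0 ⊔ g 0, _, f 2 ⊔ g 2)`. This supremum differs from the coordinatewise one in the
middle coordinate, e.g. `|(1, 0, -1)| = (1, 0, 1)` is not a fixed vector.
-/

open Matrix

theorem LinearMap.mem_ker_one_sub_iff {R M : Type*} [Ring R] [AddCommGroup M] [Module R M]
    (f : Module.End R M) (x : M) : x ∈ LinearMap.ker (1 - f) ↔ f x = x := by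
  rw [mem_ker, sub_apply, Module.End.one_apply, sub_eq_zero, eq_comm]

noncomputable section

namespace MarkovFixedSpace

abbrev markovMatrix : Matrix (Fin 3) (Fin 3) ℝ := !![1, 0, 0; 1/3, 1/3, 1/3; 0, 0, 1]

theorem markovMatrix_mem_rowStochastic : markovMatrix ∈ rowStochastic ℝ (Fin 3) := by
  rw [mem_rowStochastic_iff_sum]
  constructor
  · intro i j
    fin_cases i <;> fin_cases j <;> norm_num
  · intro i
    fin_cases i <;> simp [Fin.sum_univ_three]
    norm_num

def midpointPlane : Submodule ℝ (Fin 3 → ℝ) where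
  carrier := {x | x 0 + x 2 = 2 * x 1}
  add_mem' {x y} (hx : x 0 + x 2 = 2 * x 1) (hy : y 0 + y 2 = 2 * y 1) :=
    show x 0 + y 0 + (x 2 + y 2) = 2 * (x 1 + y 1) by linarith
  zero_mem' := show (0 : ℝ) + 0 = 2 * 0 by simp
  smul_mem' c x (hx : x 0 + x 2 = 2 * x 1) :=
    show c * x 0 + c * x 2 = 2 * (c * x 1) by rw [← mul_add, hx, mul_left_comm]

theorem mem_midpointPlane {x : Fin 3 → ℝ} : x ∈ midpointPlane ↔ x 0 + x 2 = 2 * x 1 := Iff.rfl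

theorem markovMatrix_mulVec_eq_self_iff (x : Fin 3 → ℝ) :
    markovMatrix *ᵥ x = x ↔ x ∈ midpointPlane := by
  simp [mem_midpointPlane, funext_iff, Fin.forall_fin_succ, dotProduct, Fin.sum_univ_three]
  constructor <;> intro h <;> linarith

theorem ker_one_sub_markovMatrix :
    LinearMap.ker (1 - toLin' markovMatrix) = midpointPlane := by
  ext x
  rw [LinearMap.mem_ker_one_sub_iff, toLin'_apply, markovMatrix_mulVec_eq_self_iff]

theorem span_eq_midpointPlane :
    Submodule.span ℝ {![1, 1, 1], ![1, 0, -1]} = midpointPlane := by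
  ext x
  rw [Submodule.mem_span_pair, mem_midpointPlane]
  constructor
  · rintro ⟨a, b, rfl⟩
    simp only [Pi.add_apply, Pi.smul_apply, smul_eq_mul, cons_val]
    ring
  · intro hx
    refine ⟨x 1, (x 0 - x 2) / 2, funext fun i => ?_⟩
    fin_cases i <;> simp <;> linarith

theorem abs_notMem_midpointPlane : |![(1 : ℝ), 0, -1]| ∉ midpointPlane := by
  simp [mem_midpointPlane]

theorem le_iff_of_mem_midpointPlane {x y : Fin 3 → ℝ} (hx : x ∈ midpointPlane)
    (hy : y ∈ midpointPlane) : x ≤ y ↔ x 0 ≤ y 0 ∧ x 2 ≤ y 2 := by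
  rw [mem_midpointPlane] at hx hy
  refine ⟨fun h => ⟨h 0, h 2⟩, fun ⟨h0, h2⟩ i => ?_⟩
  fin_cases i
  · exact h0
  · show x 1 ≤ y 1
    linarith
  · exact h2

def midpointLift (a c : ℝ) : Fin 3 → ℝ := ![a, (a + c) / 2, c]

theorem midpointLift_mem (a c : ℝ) : midpointLift a c ∈ midpointPlane := by
  simp [mem_midpointPlane, midpointLift]
  ring

theorem isLeast_midpointLift_sup {f g : Fin 3 → ℝ} (hf : f ∈ midpointPlane)
    (hg : g ∈ midpointPlane) :
    IsLeast {h | h ∈ midpointPlane ∧ f ≤ h ∧ g ≤ h} (midpointLift (f 0 ⊔ g 0) (f 2 ⊔ g 2)) := by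
  have hm := midpointLift_mem (f 0 ⊔ g 0) (f 2 ⊔ g 2)
  refine ⟨⟨hm, ?_, ?_⟩, fun h ⟨hh, hfh, hgh⟩ => ?_⟩
  · rw [le_iff_of_mem_midpointPlane hf hm]
    exact ⟨le_sup_left, le_sup_left⟩
  · rw [le_iff_of_mem_midpointPlane hg hm]
    exact ⟨le_sup_right, le_sup_right⟩
  · rw [le_iff_of_mem_midpointPlane hm hh]
    exact ⟨sup_le (hfh 0) (hgh 0), sup_le (hfh 2) (hgh 2)⟩

end MarkovFixedSpace

end

open MarkovFixedSpace in
/-- Example: the Markov operator `S` on `ℝ³` with matrix rows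
`(1,0,0)`, `(1/3,1/3,1/3)`, `(0,0,1)`: it is positive, fixes the constant vector
`𝟙`, its fixed space is spanned by `(1,1,1)` and `(1,0,-1)`, this fixed space is
not a sublattice of `ℝ³` (not closed under absolute value), but it is a lattice
subspace (every pair of fixed vectors has a least upper bound within the fixed
space). -/
theorem markov_fixed_space_lattice_subspace_not_sublattice :
    let S : (Fin 3 → ℝ) →ₗ[ℝ] (Fin 3 → ℝ) :=
      Matrix.toLin' !![1, 0, 0; 1/3, 1/3, 1/3; 0, 0, 1]
    -- `S` is positive:
    (∀ x : Fin 3 → ℝ, 0 ≤ x → 0 ≤ S x) ∧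
    -- `S` is Markov:
    S (fun _ => 1) = (fun _ => 1) ∧
    -- the fixed space of `S` is spanned by `(1,1,1)` and `(1,0,-1)`:
    LinearMap.ker (1 - S) =
      Submodule.span ℝ {![1, 1, 1], ![1, 0, -1]} ∧
    -- the fixed space is not a sublattice of `ℝ³`:
    (∃ f ∈ LinearMap.ker (1 - S), |f| ∉ LinearMap.ker (1 - S)) ∧
    -- but it is a lattice subspace of `ℝ³`:
    (∀ f ∈ LinearMap.ker (1 - S), ∀ g ∈ LinearMap.ker (1 - S),
      ∃ m : Fin 3 → ℝ, IsLeast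
        {h : Fin 3 → ℝ | h ∈ LinearMap.ker (1 - S) ∧ f ≤ h ∧ g ≤ h} m) := by
  intro S
  have hS : S = toLin' markovMatrix := rfl
  rw [hS, ker_one_sub_markovMatrix, span_eq_midpointPlane]
  refine ⟨fun x hx => ?_, ?_, rfl, ?_, fun f hf g hg => ⟨_, isLeast_midpointLift_sup hf hg⟩⟩
  · exact nonneg_mulVec_of_mem_rowStochastic markovMatrix_mem_rowStochastic hx
  · exact one_vecMul_of_mem_rowStochastic markovMatrix_mem_rowStochastic
  · refine ⟨![1, 0, -1], ?_, abs_notMem_midpointPlane⟩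
    simp [mem_midpointPlane]
end

section
/- Let T : ℝ³ → ℝ³ have matrix rows (1,0,0), (1,1,1), (0,0,1). Then T is positive, its spectrum is {1}, its fixed space ker(I − T) is spanned by v₁ = (1,0,−1) and v₂ = (0,1,0), T is not power bounded, and ker(I − T) is not a lattice subspace of ℝ³ since its positive cone ℝ³₊ ∩ ker(I − T) does not span ker(I − T). -/
/-!
Write the matrix as `1 + N` with `N x = (0, x₀ + x₂, 0)`, so `N² = 0`. Then `T` is unipotent,
hence has spectrum `{1}`, and `Tⁿ = 1 + n • N` grows linearly in norm. The fixed space is `ker N`,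
cut out by `x₀ + x₂ = 0`; its positive vectors all have `x₀ = 0`, so they cannot span it. Finally,
a subspace in which any two elements have a common upper bound is spanned by its positive cone
(`f = u - (u - f)` for an upper bound `u` of `f` and `0`), so the fixed space is not even upward
directed, let alone a lattice subspace.
-/

open Filter Matrix

theorem one_add_pow_of_mul_self_eq_zero {R : Type*} [Ring R] {N : R} (hN : N * N = 0) (n : ℕ) :
    (1 + N) ^ n = 1 + n • N := by
  induction n with
  | zero => simp
  | succ n ih =>
    rw [pow_succ, ih]
    simp only [add_mul, mul_add, one_mul, mul_one, smul_mul_assoc, hN, smul_zero, add_zero,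
      succ_nsmul]
    abel

theorem natCast_mul_norm_le_norm_one_add_pow {A : Type*} [SeminormedRing A] [NormedSpace ℝ A]
    {N : A} (hN : N * N = 0) (n : ℕ) : n * ‖N‖ ≤ ‖(1 + N) ^ n‖ + ‖(1 : A)‖ := by
  calc (n : ℝ) * ‖N‖ = ‖(1 + N) ^ n - 1‖ := by
        rw [one_add_pow_of_mul_self_eq_zero hN, add_sub_cancel_left, ← Nat.cast_smul_eq_nsmul ℝ,
          norm_smul, Real.norm_natCast]
    _ ≤ ‖(1 + N) ^ n‖ + ‖(1 : A)‖ := norm_sub_le _ _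

theorem tendsto_norm_one_add_pow_atTop {A : Type*} [NormedRing A] [NormedSpace ℝ A]
    {N : A} (hN : N * N = 0) (hN₀ : N ≠ 0) :
    Tendsto (fun n : ℕ ↦ ‖(1 + N) ^ n‖) atTop atTop := by
  have hlin : Tendsto (fun n : ℕ ↦ n * ‖N‖ - ‖(1 : A)‖) atTop atTop :=
    tendsto_atTop_add_const_right _ _ <|
      tendsto_natCast_atTop_atTop.atTop_mul_const (norm_pos_iff.2 hN₀)
  exact tendsto_atTop_mono (fun n ↦ by linarith [natCast_mul_norm_le_norm_one_add_pow hN n]) hlin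

theorem spectrum_one_add_of_isNilpotent {K A : Type*} [Field K] [Ring A] [Nontrivial A]
    [Algebra K A] {N : A} (hN : IsNilpotent N) : spectrum K (1 + N) = {1} := by
  ext μ
  have hshift : algebraMap K A μ - (1 + N) = algebraMap K A (μ - 1) + -N := by
    rw [map_sub, map_one]; abel
  rw [spectrum.mem_iff, Set.mem_singleton_iff, hshift]
  constructor
  · intro h
    by_contra hμ
    exact h (hN.neg.isUnit_add_left_of_commute ((sub_ne_zero.2 hμ).isUnit.map _)
      (Algebra.commutes _ _).symm)
  · rintro rfl
    simpa using hN.neg.not_isUnit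

theorem Submodule.span_nonneg_eq_of_directedOn {R E : Type*} [Ring R] [AddCommGroup E]
    [PartialOrder E] [IsOrderedAddMonoid E] [Module R E] (K : Submodule R E)
    (hK : DirectedOn (· ≤ ·) (K : Set E)) : span R {x | x ∈ K ∧ 0 ≤ x} = K := by
  refine le_antisymm (span_le.2 fun x hx ↦ hx.1) fun f hf ↦ ?_
  obtain ⟨u, hu, hfu, hu₀⟩ := hK f hf 0 K.zero_mem
  rw [← sub_sub_cancel u f]
  exact sub_mem (subset_span ⟨hu, hu₀⟩) (subset_span ⟨sub_mem hu hf, sub_nonneg.2 hfu⟩)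

theorem Matrix.mulVec_nonneg_of_nonneg {m n R : Type*} [Fintype n] [Semiring R] [PartialOrder R]
    [IsOrderedRing R] {M : Matrix m n R} (hM : ∀ i j, 0 ≤ M i j) {x : n → R} (hx : 0 ≤ x) :
    0 ≤ M *ᵥ x :=
  fun i ↦ dotProduct_nonneg_of_nonneg (hM i) hx

theorem Module.End.not_exists_norm_one_add_pow_le {E : Type*} [NormedAddCommGroup E]
    [NormedSpace ℝ E] [FiniteDimensional ℝ E] {N : Module.End ℝ E} (hN : N * N = 0)
    (hN₀ : N ≠ 0) :
    ¬ ∃ C : ℝ, ∀ n : ℕ, ‖(LinearMap.toContinuousLinearMap (1 + N)) ^ n‖ ≤ C := by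
  rintro ⟨C, hC⟩
  let e := Module.End.toContinuousLinearMap (𝕜 := ℝ) E
  have heN : e N * e N = 0 := by rw [← map_mul, hN, map_zero]
  have heN₀ : e N ≠ 0 := (map_ne_zero_iff e e.injective).2 hN₀
  obtain ⟨n, hn⟩ := ((tendsto_norm_one_add_pow_atTop heN heN₀).eventually_gt_atTop C).exists
  have hpow : (LinearMap.toContinuousLinearMap (1 + N)) ^ n = (1 + e N) ^ n := by
    rw [← map_one e, ← map_add]; rfl
  exact hn.not_ge (hpow ▸ hC n)

def nilpotentPart : Matrix (Fin 3) (Fin 3) ℝ := !![0, 0, 0; 1, 0, 1; 0, 0, 0]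

theorem one_add_nilpotentPart : 1 + nilpotentPart = !![1, 0, 0; 1, 1, 1; 0, 0, 1] := by
  ext i j; fin_cases i <;> fin_cases j <;> simp [nilpotentPart]

theorem nilpotentPart_nonneg (i j : Fin 3) : 0 ≤ nilpotentPart i j := by
  fin_cases i <;> fin_cases j <;> simp [nilpotentPart]

theorem nilpotentPart_ne_zero : nilpotentPart ≠ 0 := fun h ↦ by
  simpa [nilpotentPart] using congrFun₂ h 1 0

theorem nilpotentPart_mul_self : nilpotentPart * nilpotentPart = 0 := by
  ext i j
  fin_cases i <;> fin_cases j <;> simp [nilpotentPart, mul_apply, Fin.sum_univ_three]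

theorem nilpotentPart_mulVec (x : Fin 3 → ℝ) : nilpotentPart *ᵥ x = ![0, x 0 + x 2, 0] := by
  ext i; fin_cases i <;> simp [nilpotentPart, mulVec, dotProduct, Fin.sum_univ_three]

theorem mem_ker_toLin'_nilpotentPart {x : Fin 3 → ℝ} :
    x ∈ LinearMap.ker (toLin' nilpotentPart) ↔ x 0 + x 2 = 0 := by
  simp [toLin'_apply, nilpotentPart_mulVec, funext_iff, Fin.forall_fin_succ]

theorem ker_toLin'_nilpotentPart :
    LinearMap.ker (toLin' nilpotentPart) = Submodule.span ℝ {![1, 0, -1], ![0, 1, 0]} := by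
  ext x
  rw [mem_ker_toLin'_nilpotentPart, Submodule.mem_span_pair]
  constructor
  · intro h
    refine ⟨x 0, x 1, ?_⟩
    ext i; fin_cases i <;> simp; linarith
  · rintro ⟨a, b, rfl⟩
    simp

theorem span_nonneg_ker_toLin'_nilpotentPart_ne :
    Submodule.span ℝ {x | x ∈ LinearMap.ker (toLin' nilpotentPart) ∧ 0 ≤ x} ≠
      LinearMap.ker (toLin' nilpotentPart) := by
  intro h
  have hcone : Submodule.span ℝ {x | x ∈ LinearMap.ker (toLin' nilpotentPart) ∧ 0 ≤ x} ≤
      LinearMap.ker (LinearMap.proj 0) := by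
    refine Submodule.span_le.2 fun x ⟨hx, hx₀⟩ ↦ ?_
    rw [mem_ker_toLin'_nilpotentPart] at hx
    simp only [SetLike.mem_coe, LinearMap.mem_ker, LinearMap.proj_apply]
    linarith [show 0 ≤ x 0 from hx₀ 0, show 0 ≤ x 2 from hx₀ 2]
  have hv : ![1, 0, -1] ∈ LinearMap.ker (toLin' nilpotentPart) :=
    mem_ker_toLin'_nilpotentPart.2 (by simp)
  exact one_ne_zero (hcone (h ▸ hv) : (1 : ℝ) = 0)

/-- Example: the positive operator `T` on `ℝ³` with matrix rows
`(1,0,0)`, `(1,1,1)`, `(0,0,1)` has spectrum `{1}`, fixed space spanned by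
`v₁ = (1,0,-1)` and `v₂ = (0,1,0)`, is not power bounded, and its fixed space is
not a lattice subspace of `ℝ³` since the positive cone of the fixed space does
not span it. -/
theorem non_power_bounded_fixed_space_not_lattice_subspace :
    let T : (Fin 3 → ℝ) →ₗ[ℝ] (Fin 3 → ℝ) :=
      Matrix.toLin' !![1, 0, 0; 1, 1, 1; 0, 0, 1]
    -- `T` is positive:
    (∀ x : Fin 3 → ℝ, 0 ≤ x → 0 ≤ T x) ∧
    -- the spectrum of `T` is `{1}`:
    spectrum ℝ T = {1} ∧
    -- the fixed space of `T` is spanned by `(1,0,-1)` and `(0,1,0)`: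
    LinearMap.ker (1 - T) = Submodule.span ℝ {![1, 0, -1], ![0, 1, 0]} ∧
    -- `T` is not power bounded (w.r.t. the sup norm on `ℝ³`):
    ¬ (∃ C : ℝ, ∀ n : ℕ, ‖(LinearMap.toContinuousLinearMap T) ^ n‖ ≤ C) ∧
    -- the positive cone of the fixed space does not span the fixed space:
    Submodule.span ℝ {x : Fin 3 → ℝ | x ∈ LinearMap.ker (1 - T) ∧ 0 ≤ x} ≠
      LinearMap.ker (1 - T) ∧
    -- hence the fixed space is not a lattice subspace of `ℝ³`:
    ¬ (∀ f ∈ LinearMap.ker (1 - T), ∀ g ∈ LinearMap.ker (1 - T),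
      ∃ m : Fin 3 → ℝ, IsLeast
        {h : Fin 3 → ℝ | h ∈ LinearMap.ker (1 - T) ∧ f ≤ h ∧ g ≤ h} m) := by
  rw [← one_add_nilpotentPart, map_add, toLin'_one, ← Module.End.one_eq_id]
  intro T
  have hN : toLin' nilpotentPart * toLin' nilpotentPart = 0 := by
    rw [Module.End.mul_eq_comp, ← toLin'_mul, nilpotentPart_mul_self, map_zero]
  have hker : LinearMap.ker (1 - T) = LinearMap.ker (toLin' nilpotentPart) := by
    rw [sub_add_cancel_left, LinearMap.ker_neg]
  have hcone := hker ▸ span_nonneg_ker_toLin'_nilpotentPart_ne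
  refine ⟨fun x hx ↦ add_nonneg hx (mulVec_nonneg_of_nonneg nilpotentPart_nonneg hx),
    spectrum_one_add_of_isNilpotent ⟨2, by rw [sq, hN]⟩,
    hker.trans ker_toLin'_nilpotentPart,
    Module.End.not_exists_norm_one_add_pow_le hN
      (toLin'.map_ne_zero_iff.2 nilpotentPart_ne_zero),
    hcone, fun h ↦ hcone (Submodule.span_nonneg_eq_of_directedOn _ fun f hf g hg ↦ ?_)⟩
  obtain ⟨m, ⟨hm, hfm, hgm⟩, -⟩ := h f hf g hg
  exact ⟨m, hm, hfm, hgm⟩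
end
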